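/- Let R be a ring, a ∈ R regular with inner inverse x (a = axa), and b = 1 - a regular with inner inverse y. Then r(a) + r(b) is a direct summand of R as a right R-module, where r(·) denotes the right annihilator. -/

import Mathlib

noncomputable section

namespace SepExchange

variable (R : Type) [Ring R]

/-- The right annihilator `r(a)` as a right `R`-submodule of `R`. -/
def rAnn (a : R) : Submodule Rᵐᵒᵖ R where
  carrier := {x | a * x = 0}
  add_mem' := by intro x y hx hy; simp_all [Set.mem_setOf_eq, mul_add]
  zero_mem' := by simp
  smul_mem' := by
    intro c x hx
    simp only [Set.mem_setOf_eq, MulOpposite.smul_eq_mul_unop] at *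
    rw [← mul_assoc, hx, zero_mul]

/-- The principal right ideal `aR` as a right `R`-submodule of `R`. -/
def rIdeal (a : R) : Submodule Rᵐᵒᵖ R := Submodule.span Rᵐᵒᵖ {a}

/-- The right `R`-module `a·r(a²) = {a*t : a²*t = 0}`. -/
def arAnn2 (a : R) : Submodule Rᵐᵒᵖ R where
  carrier := {x | ∃ t, x = a * t ∧ a ^ 2 * t = 0}
  add_mem' := by
    rintro x y ⟨t1, rfl, h1⟩ ⟨t2, rfl, h2⟩
    exact ⟨t1 + t2, by rw [mul_add], by rw [mul_add, h1, h2, add_zero]⟩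
  zero_mem' := ⟨0, by simp, by simp⟩
  smul_mem' := by
    rintro c x ⟨t, rfl, ht⟩
    refine ⟨t * c.unop, ?_, ?_⟩
    · simp only [MulOpposite.smul_eq_mul_unop, MulOpposite.unop_op, mul_assoc]
    · rw [← mul_assoc, ht, zero_mul]

/-- `R` is an exchange ring: for each `a` there is an idempotent `e ∈ aR`
with `1 - e ∈ (1-a)R`. -/
def ExchangeRing : Prop :=
  ∀ a : R, ∃ e : R, IsIdempotentElem e ∧ (∃ r, e = a * r) ∧ (∃ s, (1 : R) - e = (1 - a) * s)

/-- `R` is separative: `A⊕A ≅ A⊕B ≅ B⊕B ⟹ A ≅ B` for finitely generated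
projective right `R`-modules. -/
def Separative : Prop :=
  ∀ (A B : Type) [AddCommGroup A] [Module Rᵐᵒᵖ A] [AddCommGroup B] [Module Rᵐᵒᵖ B],
    Module.Finite Rᵐᵒᵖ A → Module.Projective Rᵐᵒᵖ A →
    Module.Finite Rᵐᵒᵖ B → Module.Projective Rᵐᵒᵖ B →
    Nonempty ((A × A) ≃ₗ[Rᵐᵒᵖ] (A × B)) → Nonempty ((A × B) ≃ₗ[Rᵐᵒᵖ] (B × B)) →
    Nonempty (A ≃ₗ[Rᵐᵒᵖ] B)

/-- `a` is unit-regular. -/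
def IsUnitRegular (a : R) : Prop := ∃ u : Rˣ, a = a * (u : R) * a

/-- `a` is special clean: there is an idempotent `e` with `a - e` a unit and
`aR ∩ eR = 0`. -/
def IsSpecialClean (a : R) : Prop :=
  ∃ e : R, IsIdempotentElem e ∧ IsUnit (a - e) ∧ rIdeal R a ⊓ rIdeal R e = ⊥

/-- `A ≲⊕ B`: `A` is isomorphic to a direct summand of `B` (right `R`-modules). -/
def SummandOf (A B : Type) [AddCommGroup A] [Module Rᵐᵒᵖ A]
    [AddCommGroup B] [Module Rᵐᵒᵖ B] : Prop :=
  ∃ N N' : Submodule Rᵐᵒᵖ B, IsCompl N N' ∧ Nonempty (A ≃ₗ[Rᵐᵒᵖ] ↥N)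

/-- `A ∝ B`: `A` is isomorphic to a direct summand of a finite direct sum of
copies of `B`. -/
def Propto (A B : Type) [AddCommGroup A] [Module Rᵐᵒᵖ A]
    [AddCommGroup B] [Module Rᵐᵒᵖ B] : Prop :=
  ∃ m : ℕ, 0 < m ∧ SummandOf R A (Fin m → B)

end SepExchange

/-!
Write `b = 1 - a`. Regularity gives `r(a) = (1 - xa)R` and `r(b) = gR` with `g = 1 - yb`
idempotent. From `bg = 0` we get `ag = g`, so `gR = (ga)R` with `ga` idempotent, and
`ga(1 - xa) = 0`. For idempotents `p, q` with `qp = 0`, the element `e = p + (1 - p)q` is an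
idempotent fixing `p` and `q`, whence `pR + qR = eR`, a direct summand with complement `r(e)`.
-/

namespace SepExchange

section Idempotents

variable {R : Type*} [Ring R] {a x p q : R}

theorem isIdempotentElem_mul_of_eq_mul_mul (h : a = a * x * a) : IsIdempotentElem (x * a) := by
  rw [IsIdempotentElem, mul_assoc, ← mul_assoc a, ← h]

theorem mul_one_sub_mul_eq_zero_of_eq_mul_mul (h : a = a * x * a) : a * (1 - x * a) = 0 := by
  rw [mul_sub, mul_one, ← mul_assoc, ← h, sub_self]

theorem add_one_sub_mul_mul_eq_left (hp : IsIdempotentElem p) (hqp : q * p = 0) :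
    (p + (1 - p) * q) * p = p := by
  rw [add_mul, hp.eq, mul_assoc, hqp, mul_zero, add_zero]

theorem add_one_sub_mul_mul_eq_right (hq : IsIdempotentElem q) :
    (p + (1 - p) * q) * q = q := by
  rw [add_mul, mul_assoc, hq.eq]
  noncomm_ring

theorem isIdempotentElem_add_one_sub_mul (hp : IsIdempotentElem p) (hq : IsIdempotentElem q)
    (hqp : q * p = 0) : IsIdempotentElem (p + (1 - p) * q) := by
  set e := p + (1 - p) * q
  have hep : e * p = p := add_one_sub_mul_mul_eq_left hp hqp
  have heq : e * q = q := add_one_sub_mul_mul_eq_right hq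
  calc e * e = e * p + e * q - e * p * q := by simp only [e]; noncomm_ring
    _ = p + q - p * q := by rw [hep, heq]
    _ = e := by simp only [e]; noncomm_ring

end Idempotents

section RightIdeals

variable {R : Type} [Ring R] {a c d e p q x : R}

@[simp]
theorem mem_rAnn {z : R} : z ∈ rAnn R a ↔ a * z = 0 := Iff.rfl

theorem mem_rIdeal {z : R} : z ∈ rIdeal R c ↔ ∃ t, c * t = z :=
  Submodule.mem_span_singleton.trans
    ⟨fun ⟨t, ht⟩ => ⟨t.unop, ht⟩, fun ⟨t, ht⟩ => ⟨MulOpposite.op t, ht⟩⟩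

theorem mul_mem_rIdeal (c t : R) : c * t ∈ rIdeal R c := mem_rIdeal.2 ⟨t, rfl⟩

theorem rAnn_eq_rIdeal_one_sub_mul (h : a = a * x * a) : rAnn R a = rIdeal R (1 - x * a) := by
  ext z
  refine ⟨fun hz => mem_rIdeal.2 ⟨z, ?_⟩, ?_⟩
  · rw [sub_mul, one_mul, mul_assoc, mem_rAnn.1 hz, mul_zero, sub_zero]
  · intro hz
    obtain ⟨t, rfl⟩ := mem_rIdeal.1 hz
    rw [mem_rAnn, ← mul_assoc, mul_one_sub_mul_eq_zero_of_eq_mul_mul h, zero_mul]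

theorem rIdeal_mul_eq_of_eq_mul_mul (h : c = c * d * c) : rIdeal R (c * d) = rIdeal R c := by
  refine le_antisymm ?_ ?_ <;> rw [rIdeal, Submodule.span_singleton_le_iff_mem]
  · exact mul_mem_rIdeal c d
  · have hcdc := mul_mem_rIdeal (c * d) c
    rwa [← h] at hcdc

theorem rIdeal_sup_rIdeal_eq (hp : IsIdempotentElem p) (hq : IsIdempotentElem q)
    (hqp : q * p = 0) : rIdeal R p ⊔ rIdeal R q = rIdeal R (p + (1 - p) * q) := by
  refine le_antisymm (sup_le ?_ ?_) ?_ <;> rw [rIdeal, Submodule.span_singleton_le_iff_mem]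
  · have hep := mul_mem_rIdeal (p + (1 - p) * q) p
    rwa [add_one_sub_mul_mul_eq_left hp hqp] at hep
  · have heq := mul_mem_rIdeal (p + (1 - p) * q) q
    rwa [add_one_sub_mul_mul_eq_right hq] at heq
  · have hsplit : p + (1 - p) * q = p * (1 - q) + q * 1 := by noncomm_ring
    rw [hsplit]
    exact Submodule.add_mem_sup (mul_mem_rIdeal p _) (mul_mem_rIdeal q 1)

theorem isCompl_rIdeal_rAnn (he : IsIdempotentElem e) : IsCompl (rIdeal R e) (rAnn R e) := by
  constructor
  · rw [Submodule.disjoint_def]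
    rintro z hz (hez : e * z = 0)
    obtain ⟨t, rfl⟩ := mem_rIdeal.1 hz
    rwa [← mul_assoc, he.eq] at hez
  · rw [codisjoint_iff, eq_top_iff]
    intro z _
    have hsplit : z = e * z + (1 - e) * z := by noncomm_ring
    rw [hsplit]
    refine Submodule.add_mem_sup (mul_mem_rIdeal e z) ?_
    rw [mem_rAnn, ← mul_assoc, he.mul_one_sub_self, zero_mul]

end RightIdeals

end SepExchange

open SepExchange in
/-- If `a` and `b = 1 - a` are both regular, then `r(a) + r(b)` is a direct
summand of `R` as a right `R`-module. -/
theorem stmt4 (R : Type) [Ring R] (a x y : R)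
    (ha : a = a * x * a) (hb : (1 - a) = (1 - a) * y * (1 - a)) :
    ∃ C : Submodule Rᵐᵒᵖ R, IsCompl (rAnn R a ⊔ rAnn R (1 - a)) C := by
  set g := 1 - y * (1 - a)
  have hp : IsIdempotentElem (1 - x * a) := (isIdempotentElem_mul_of_eq_mul_mul ha).one_sub
  have hg : IsIdempotentElem g := (isIdempotentElem_mul_of_eq_mul_mul hb).one_sub
  have hag : a * g = g := by
    calc a * g = g - (1 - a) * g := by noncomm_ring
      _ = g := by rw [mul_one_sub_mul_eq_zero_of_eq_mul_mul hb, sub_zero]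
  have hgag : g = g * a * g := by rw [mul_assoc, hag, hg.eq]
  have hq : IsIdempotentElem (g * a) := by
    rw [IsIdempotentElem, ← mul_assoc, ← hgag]
  have hqp : g * a * (1 - x * a) = 0 := by
    rw [mul_assoc, mul_one_sub_mul_eq_zero_of_eq_mul_mul ha, mul_zero]
  rw [rAnn_eq_rIdeal_one_sub_mul ha, rAnn_eq_rIdeal_one_sub_mul hb,
    ← rIdeal_mul_eq_of_eq_mul_mul hgag, rIdeal_sup_rIdeal_eq hp hq hqp]
  exact ⟨_, isCompl_rIdeal_rAnn (isIdempotentElem_add_one_sub_mul hp hq hqp)⟩
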